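/- arXiv:1110.0058 — 4 statements merged into one kernel-verified Lean document; each statement's English description precedes it below -/
import Mathlib

section
/- If λ ∈ ℝ is a root of π_n, then the nonzero vector π(λ) = (π_0(λ), π_1(λ), …, π_{n−1}(λ)) ∈ ℝ^n satisfies J · π(λ) = λ · π(λ); that is, π(λ) is an eigenvector of the Jacobi matrix J with eigenvalue λ. -/
open MeasureTheory Polynomial

/-!
The Jacobi matrix is the matrix of multiplication by `X` in the orthonormal basis `π`:
`J i j = ⟨π j, X π i⟩`. Indeed `⟨π j, X π i⟩ = ⟨X π j, π i⟩` vanishes unless `|i - j| ≤ 1` by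
orthogonality to lower degrees, the diagonal entries are `α i` by definition, and
`⟨π (i+1), X π i⟩ = ‖P (i+1)‖² / (‖P i‖ ‖P (i+1)‖) = √β (i+1)` because `X P i - P (i+1)` has
degree `≤ i`. For `i < n`, `X π i` has degree `≤ n`, so it is the sum of its components along
`π 0, …, π n`; evaluating at `λ` gives `λ π i(λ) = ∑_{j<n} J i j π j(λ) + ⟨π n, X π i⟩ π n(λ)`,
and the last term vanishes at a root of `π n`. The vector is nonzero because `π 0` is a nonzero
constant.
-/

namespace Polynomial

variable {K : Type*} [Field K]

structure IsOrthonormalSeq (B : LinearMap.BilinForm K K[X]) (π : ℕ → K[X]) : Prop where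
  degree_eq : ∀ i, (π i).degree = i
  apply_self : ∀ i, B (π i) (π i) = 1
  apply_eq_zero_of_degree_lt : ∀ (i : ℕ) (q : K[X]), q.degree < i → B (π i) q = 0

namespace IsOrthonormalSeq

variable {B : LinearMap.BilinForm K K[X]} {π : ℕ → K[X]}

theorem ne_zero (h : IsOrthonormalSeq B π) (i : ℕ) : π i ≠ 0 := by
  intro h0
  simpa [h0] using h.degree_eq i

theorem eval_zero_ne_zero (h : IsOrthonormalSeq B π) (x : K) : (π 0).eval x ≠ 0 := by
  have h0 := h.ne_zero 0
  rw [eq_C_of_degree_eq_zero (h.degree_eq 0)] at h0 ⊢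
  simpa using h0

theorem apply_eq_ite (h : IsOrthonormalSeq B π) (hB : B.IsSymm) (i j : ℕ) :
    B (π i) (π j) = if i = j then 1 else 0 := by
  rcases lt_trichotomy i j with hij | rfl | hij
  · rw [hB.eq, h.apply_eq_zero_of_degree_lt j _ (by rw [h.degree_eq]; exact_mod_cast hij),
      if_neg hij.ne]
  · rw [h.apply_self, if_pos rfl]
  · rw [h.apply_eq_zero_of_degree_lt i _ (by rw [h.degree_eq]; exact_mod_cast hij),
      if_neg hij.ne']

theorem eq_zero_of_forall_apply_eq_zero (h : IsOrthonormalSeq B π) {k : ℕ} {r : K[X]}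
    (hr : r.degree < k) (horth : ∀ j < k, B (π j) r = 0) : r = 0 := by
  by_contra hr0
  set d := r.natDegree
  have hdk : d < k := (natDegree_lt_iff_degree_lt hr0).mpr hr
  have hπd : (π d).leadingCoeff ≠ 0 := leadingCoeff_ne_zero.mpr (h.ne_zero d)
  set c := r.leadingCoeff / (π d).leadingCoeff
  have hc : c ≠ 0 := div_ne_zero (leadingCoeff_ne_zero.mpr hr0) hπd
  -- subtracting `c • π d` cancels the leading term of `r`
  have hlower : (r - c • π d).degree < d := by
    have hdeg : (c • π d).degree = r.degree := by
      rw [degree_smul_of_smul_regular _ (hc.isUnit.isSMulRegular _), h.degree_eq,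
        degree_eq_natDegree hr0]
    have hlc : r.leadingCoeff = (c • π d).leadingCoeff := by
      rw [leadingCoeff_smul_of_smul_regular _ (hc.isUnit.isSMulRegular _), smul_eq_mul,
        div_mul_cancel₀ _ hπd]
    simpa [degree_eq_natDegree hr0] using degree_sub_lt_left hdeg.symm hr0 hlc
  have := h.apply_eq_zero_of_degree_lt d _ hlower
  rw [map_sub, map_smul, h.apply_self, horth d hdk, smul_eq_mul, mul_one, zero_sub,
    neg_eq_zero] at this
  exact hc this

theorem eq_sum_apply_smul (h : IsOrthonormalSeq B π) (hB : B.IsSymm) {k : ℕ} {r : K[X]}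
    (hr : r.degree < k) : r = ∑ j ∈ Finset.range k, B (π j) r • π j := by
  rw [← sub_eq_zero]
  refine h.eq_zero_of_forall_apply_eq_zero (k := k) ?_ fun m hm => ?_
  · rw [← mem_degreeLT] at hr ⊢
    refine Submodule.sub_mem _ hr (Submodule.sum_mem _ fun j hj => Submodule.smul_mem _ _ ?_)
    rw [mem_degreeLT, h.degree_eq]
    exact_mod_cast Finset.mem_range.mp hj
  · simp [map_sum, h.apply_eq_ite hB, Finset.mem_range.mpr hm]

theorem apply_X_mul_eq_zero_of_succ_lt (h : IsOrthonormalSeq B π) {i j : ℕ} (hij : i + 1 < j) :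
    B (π j) (X * π i) = 0 :=
  h.apply_eq_zero_of_degree_lt j _ <| by
    rw [degree_mul, degree_X, h.degree_eq, add_comm]; exact_mod_cast hij

theorem apply_X_mul_eq_zero (h : IsOrthonormalSeq B π) (hB : B.IsSymm)
    (hX : ∀ p q, B (X * p) q = B p (X * q)) {i j : ℕ} (hij : i ≠ j) (hsucc : i + 1 ≠ j)
    (hpred : j + 1 ≠ i) : B (π j) (X * π i) = 0 := by
  rcases lt_or_gt_of_ne hij with hlt | hgt
  · exact h.apply_X_mul_eq_zero_of_succ_lt (by omega)
  · rw [hB.eq, hX]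
    exact h.apply_X_mul_eq_zero_of_succ_lt (i := j) (by omega)

theorem eval_mul_eq_sum_of_eval_eq_zero (h : IsOrthonormalSeq B π) (hB : B.IsSymm) {n i : ℕ}
    (hi : i < n) {x : K} (hx : (π n).eval x = 0) :
    x * (π i).eval x = ∑ j ∈ Finset.range n, B (π j) (X * π i) * (π j).eval x := by
  have hdeg : (X * π i).degree < ↑(n + 1) := by
    rw [degree_mul, degree_X, h.degree_eq, add_comm]; exact_mod_cast Nat.succ_lt_succ hi
  have := congrArg (eval x) (h.eq_sum_apply_smul hB hdeg)
  simpa [eval_finsetSum, Finset.sum_range_succ, hx] using this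

end IsOrthonormalSeq

theorem apply_succ_X_mul_of_monic {B : LinearMap.BilinForm K K[X]} {P : ℕ → K[X]}
    (hmonic : ∀ i, (P i).Monic) (hdeg : ∀ i : ℕ, (P i).degree = i)
    (horth : ∀ (i : ℕ) (q : K[X]), q.degree < i → B (P i) q = 0) (i : ℕ) :
    B (P (i + 1)) (X * P i) = B (P (i + 1)) (P (i + 1)) := by
  have hXP : (X * P i).degree = (P (i + 1)).degree := by
    rw [degree_mul, degree_X, hdeg, hdeg, add_comm]; rfl
  have hlower := degree_sub_lt_left hXP (monic_X.mul (hmonic i)).ne_zero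
    (by rw [(monic_X.mul (hmonic i)).leadingCoeff, (hmonic _).leadingCoeff])
  rw [hXP, hdeg] at hlower
  rw [← sub_add_cancel (X * P i) (P (i + 1)), map_add, horth _ _ hlower, zero_add]

section Normalization

variable {B : LinearMap.BilinForm ℝ ℝ[X]} {P π : ℕ → ℝ[X]}

theorem isOrthonormalSeq_of_eq_inv_sqrt_smul (hdeg : ∀ i : ℕ, (P i).degree = i)
    (horth : ∀ (i : ℕ) (q : ℝ[X]), q.degree < i → B (P i) q = 0)
    (hpos : ∀ i, 0 < B (P i) (P i)) (hπ : ∀ i, π i = (√(B (P i) (P i)))⁻¹ • P i) :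
    IsOrthonormalSeq B π where
  degree_eq i := by
    have hc : (√(B (P i) (P i)))⁻¹ ≠ 0 := inv_ne_zero (Real.sqrt_pos.mpr (hpos i)).ne'
    rw [hπ, degree_smul_of_smul_regular _ (hc.isUnit.isSMulRegular _), hdeg]
  apply_self i := by
    simp only [hπ, map_smul, LinearMap.smul_apply, smul_eq_mul]
    rw [← mul_assoc, ← mul_inv, Real.mul_self_sqrt (hpos i).le, inv_mul_cancel₀ (hpos i).ne']
  apply_eq_zero_of_degree_lt i q hq := by
    rw [hπ, map_smul, LinearMap.smul_apply, horth i q hq, smul_zero]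

theorem apply_succ_X_mul_of_eq_inv_sqrt_smul (hmonic : ∀ i, (P i).Monic)
    (hdeg : ∀ i : ℕ, (P i).degree = i)
    (horth : ∀ (i : ℕ) (q : ℝ[X]), q.degree < i → B (P i) q = 0)
    (hpos : ∀ i, 0 < B (P i) (P i)) (hπ : ∀ i, π i = (√(B (P i) (P i)))⁻¹ • P i) (i : ℕ) :
    B (π (i + 1)) (X * π i) = √(B (P (i + 1)) (P (i + 1)) / B (P i) (P i)) := by
  simp only [hπ, mul_smul_comm, map_smul, LinearMap.smul_apply, smul_eq_mul,
    apply_succ_X_mul_of_monic hmonic hdeg horth, Real.sqrt_div' _ (hpos i).le, inv_mul_eq_div,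
    inv_mul_eq_div, Real.div_sqrt]

end Normalization

end Polynomial

section MomentForm

variable {μ : Measure ℝ}

theorem integrable_eval_of_integrable_pow (hmom : ∀ n : ℕ, Integrable (fun t : ℝ => t ^ n) μ)
    (p : ℝ[X]) : Integrable (fun t => p.eval t) μ := by
  simp_rw [eval_eq_sum_range]
  exact integrable_finsetSum _ fun k _ => (hmom k).const_mul _

theorem integrable_eval_mul_eval_of_integrable_pow
    (hmom : ∀ n : ℕ, Integrable (fun t : ℝ => t ^ n) μ) (p q : ℝ[X]) :
    Integrable (fun t => p.eval t * q.eval t) μ := by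
  simpa using integrable_eval_of_integrable_pow hmom (p * q)

noncomputable def momentForm (μ : Measure ℝ)
    (hmom : ∀ n : ℕ, Integrable (fun t : ℝ => t ^ n) μ) : LinearMap.BilinForm ℝ ℝ[X] :=
  LinearMap.mk₂ ℝ (fun p q => ∫ t, p.eval t * q.eval t ∂μ)
    (fun p₁ p₂ q => by
      simp only [eval_add, add_mul]
      exact integral_add (integrable_eval_mul_eval_of_integrable_pow hmom _ _)
        (integrable_eval_mul_eval_of_integrable_pow hmom _ _))
    (fun c p q => by simp only [eval_smul, smul_eq_mul, mul_assoc, integral_const_mul])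
    (fun p q₁ q₂ => by
      simp only [eval_add, mul_add]
      exact integral_add (integrable_eval_mul_eval_of_integrable_pow hmom _ _)
        (integrable_eval_mul_eval_of_integrable_pow hmom _ _))
    (fun c p q => by simp only [eval_smul, smul_eq_mul, mul_left_comm _ c, integral_const_mul])

variable (hmom : ∀ n : ℕ, Integrable (fun t : ℝ => t ^ n) μ)

@[simp]
theorem momentForm_apply (p q : ℝ[X]) :
    momentForm μ hmom p q = ∫ t, p.eval t * q.eval t ∂μ :=
  rfl

theorem momentForm_isSymm : (momentForm μ hmom).IsSymm :=
  ⟨fun p q => by simp only [momentForm_apply, mul_comm]⟩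

theorem momentForm_X_mul (p q : ℝ[X]) :
    momentForm μ hmom (X * p) q = momentForm μ hmom p (X * q) := by
  simp only [momentForm_apply, eval_mul, eval_X, mul_assoc, mul_left_comm]

end MomentForm

theorem jacobi_eigenvector_of_root_general
    (μ : Measure ℝ)
    (hmom : ∀ n : ℕ, Integrable (fun t : ℝ => t ^ n) μ)
    (ip : ℝ[X] → ℝ[X] → ℝ)
    (hip : ∀ p q : ℝ[X], ip p q = ∫ t, p.eval t * q.eval t ∂μ)
    (hpos : ∀ p : ℝ[X], p ≠ 0 → 0 < ip p p)
    (P : ℕ → ℝ[X])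
    (hmonic : ∀ i : ℕ, (P i).Monic)
    (hdeg : ∀ i : ℕ, (P i).degree = i)
    (horth : ∀ i : ℕ, ∀ q : ℝ[X], q.degree < (i : ℕ) → ip (P i) q = 0)
    (π : ℕ → ℝ[X])
    (hπ : ∀ i : ℕ, π i = (Real.sqrt (ip (P i) (P i)))⁻¹ • P i)
    (α : ℕ → ℝ) (hα : ∀ i : ℕ, α i = ip (X * π i) (π i))
    (β : ℕ → ℝ)
    (hβ : ∀ i : ℕ, 1 ≤ i → β i = ip (P i) (P i) / ip (P (i - 1)) (P (i - 1)))
    (n : ℕ) (hn : 1 ≤ n)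
    (J : Matrix (Fin n) (Fin n) ℝ)
    (hJ : ∀ i j : Fin n, J i j =
      if i = j then α i.val
      else if i.val + 1 = j.val ∨ j.val + 1 = i.val then
        Real.sqrt (β (max i.val j.val))
      else 0)
    (lam : ℝ) (hroot : (π n).eval lam = 0) :
    (fun i : Fin n => (π i.val).eval lam) ≠ 0 ∧
    J.mulVec (fun i : Fin n => (π i.val).eval lam) =
      lam • (fun i : Fin n => (π i.val).eval lam) := by
  obtain rfl : ip = fun p q => momentForm μ hmom p q := funext₂ hip
  set B := momentForm μ hmom
  have hB : B.IsSymm := momentForm_isSymm hmom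
  have hPpos i : 0 < B (P i) (P i) := hpos _ (hmonic i).ne_zero
  have hON : IsOrthonormalSeq B π := isOrthonormalSeq_of_eq_inv_sqrt_smul hdeg horth hPpos hπ
  have hsqrtβ i : √(β (i + 1)) = B (π (i + 1)) (X * π i) := by
    rw [hβ (i + 1) (by omega), Nat.add_sub_cancel,
      apply_succ_X_mul_of_eq_inv_sqrt_smul hmonic hdeg horth hPpos hπ]
  have hJB (i j : Fin n) : J i j = B (π j) (X * π i) := by
    rw [hJ]
    split_ifs with hij hadj
    · rw [hij, hα, hB.eq]
    · rcases hadj with hsucc | hpred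
      · rw [max_eq_right (by omega), ← hsucc, hsqrtβ]
      · rw [max_eq_left (by omega), ← hpred, hsqrtβ, hB.eq, momentForm_X_mul, hB.eq]
    · exact (hON.apply_X_mul_eq_zero hB (momentForm_X_mul hmom) (by omega) (by omega)
        (by omega)).symm
  refine ⟨fun h0 => hON.eval_zero_ne_zero lam (congrFun h0 ⟨0, hn⟩), funext fun i => ?_⟩
  simp only [Matrix.mulVec, dotProduct, hJB, Pi.smul_apply, smul_eq_mul]
  rw [hON.eval_mul_eq_sum_of_eval_eq_zero hB i.isLt hroot,
    Fin.sum_univ_eq_sum_range (fun j => B (π j) (X * π i) * (π j).eval lam)]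

/-- if λ is a root of π_n then (π_0(λ),…,π_{n-1}(λ)) is a nonzero
eigenvector of the Jacobi matrix J with eigenvalue λ. -/
theorem jacobi_eigenvector_of_root
    (μ : Measure ℝ) [IsProbabilityMeasure μ]
    (hmom : ∀ n : ℕ, Integrable (fun t : ℝ => t ^ n) μ)
    (ip : ℝ[X] → ℝ[X] → ℝ)
    (hip : ∀ p q : ℝ[X], ip p q = ∫ t, p.eval t * q.eval t ∂μ)
    (hpos : ∀ p : ℝ[X], p ≠ 0 → 0 < ip p p)
    (P : ℕ → ℝ[X])
    (hmonic : ∀ i : ℕ, (P i).Monic)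
    (hdeg : ∀ i : ℕ, (P i).degree = i)
    (horth : ∀ i : ℕ, ∀ q : ℝ[X], q.degree < (i : ℕ) → ip (P i) q = 0)
    (π : ℕ → ℝ[X])
    (hπ : ∀ i : ℕ, π i = (Real.sqrt (ip (P i) (P i)))⁻¹ • P i)
    (α : ℕ → ℝ) (hα : ∀ i : ℕ, α i = ip (X * π i) (π i))
    (β : ℕ → ℝ)
    (hβ : ∀ i : ℕ, 1 ≤ i → β i = ip (P i) (P i) / ip (P (i - 1)) (P (i - 1)))
    (n : ℕ) (hn : 1 ≤ n)
    (J : Matrix (Fin n) (Fin n) ℝ)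
    (hJ : ∀ i j : Fin n, J i j =
      if i = j then α i.val
      else if i.val + 1 = j.val ∨ j.val + 1 = i.val then
        Real.sqrt (β (max i.val j.val))
      else 0)
    (lam : ℝ) (hroot : (π n).eval lam = 0) :
    (fun i : Fin n => (π i.val).eval lam) ≠ 0 ∧
    J.mulVec (fun i : Fin n => (π i.val).eval lam) =
      lam • (fun i : Fin n => (π i.val).eval lam) :=
  jacobi_eigenvector_of_root_general μ hmom ip hip hpos P hmonic hdeg horth π hπ α hα β hβ n hn J hJ
    lam hroot
end

section
/- The n-point Gaussian quadrature rule has degree of exactness 2n−1: for every real polynomial p with deg p ≤ 2n−1, one has Σ_{j=0}^{n−1} ν_j p(λ_j) = ∫ p(t) dμ(t). -/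
/-!
Let `w j = ∫ ℓ_j dμ`, where `ℓ_j` is the Lagrange basis on the nodes; this interpolatory rule
is exact below degree `n`. Dividing `p` by the monic `π̄_n`, whose zeros are the nodes, gives
`p = π̄_n q + r` with `deg q, deg r < n`: the term `π̄_n q` vanishes at every node and integrates
to zero by orthogonality, so the rule is exact below degree `2n`. Applied to `π_i π_k` with
`i, k < n` this says `V diag(w) Vᵀ = 1` for `V i j = π_i(λ_j)`; hence `Vᵀ V diag(w) = 1`,
whose diagonal reads `w_j ∑ᵢ π_i(λ_j)² = 1`, i.e. `w = ν`.
-/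

open MeasureTheory Polynomial

theorem Matrix.sum_sq_mul_eq_one_of_mul_diagonal_mul_transpose_eq_one
    {ι R : Type*} [Fintype ι] [DecidableEq ι] [CommRing R]
    {V : Matrix ι ι R} {w : ι → R} (h : V * Matrix.diagonal w * V.transpose = 1) (j : ι) :
    (∑ i, V i j ^ 2) * w j = 1 := by
  have h' : V.transpose * (V * Matrix.diagonal w) = 1 := mul_eq_one_comm.mp h
  have := congr_fun (congr_fun h' j) j
  rw [Matrix.mul_apply] at this
  simpa [Matrix.mul_diagonal, sq, Finset.sum_mul, mul_assoc] using this

theorem eq_inv_sum_sq_eval_of_sum_mul_eval_mul_eval {ι : Type*} [Fintype ι] [DecidableEq ι]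
    {φ : ι → ℝ[X]} {x w : ι → ℝ}
    (h : ∀ i k, ∑ j, w j * ((φ i).eval (x j) * (φ k).eval (x j)) = if i = k then 1 else 0)
    (j : ι) : w j = (∑ i, (φ i).eval (x j) ^ 2)⁻¹ := by
  refine eq_inv_of_mul_eq_one_right <|
    Matrix.sum_sq_mul_eq_one_of_mul_diagonal_mul_transpose_eq_one
      (V := .of fun i j => (φ i).eval (x j)) ?_ j
  ext i k
  rw [Matrix.one_apply, ← h, Matrix.mul_apply]
  simp only [Matrix.mul_diagonal, Matrix.transpose_apply, Matrix.of_apply]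
  exact Finset.sum_congr rfl fun j _ => by ring

section

variable {μ : Measure ℝ}

theorem sum_integral_lagrangeBasis_mul_eval {ι : Type*} [Fintype ι] [DecidableEq ι]
    (hint : ∀ p : ℝ[X], Integrable (fun t => p.eval t) μ) {x : ι → ℝ} (hx : Function.Injective x)
    {r : ℝ[X]} (hr : r.degree < Fintype.card ι) :
    ∑ j, (∫ t, (Lagrange.basis Finset.univ x j).eval t ∂μ) * r.eval (x j) = ∫ t, r.eval t ∂μ := by
  conv_rhs => rw [Lagrange.eq_interpolate (s := Finset.univ) (f := r) hx.injOn (by simpa using hr),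
    Lagrange.interpolate_apply]
  simp_rw [eval_finsetSum, eval_mul, eval_C]
  rw [integral_finsetSum _ fun j _ => (hint _).const_mul _]
  simp_rw [integral_const_mul, mul_comm]

theorem sum_mul_eval_eq_integral_of_natDegree_lt_two_mul {ι : Type*} [Fintype ι]
    (hint : ∀ p : ℝ[X], Integrable (fun t => p.eval t) μ) {Q : ℝ[X]} {n : ℕ} (hQ : Q.Monic)
    (hQn : Q.degree = n) (hQorth : ∀ q : ℝ[X], q.degree < n → ∫ t, Q.eval t * q.eval t ∂μ = 0)
    {x w : ι → ℝ} (hroot : ∀ j, Q.IsRoot (x j))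
    (hexact : ∀ r : ℝ[X], r.degree < n → ∑ j, w j * r.eval (x j) = ∫ t, r.eval t ∂μ)
    {p : ℝ[X]} (hp : p.natDegree < 2 * n) :
    ∑ j, w j * p.eval (x j) = ∫ t, p.eval t ∂μ := by
  have hdiv := modByMonic_add_div p Q
  have hrem : (p %ₘ Q).degree < n := hQn ▸ degree_modByMonic_lt p hQ
  have hquot : (p /ₘ Q).degree < n := by
    refine degree_le_natDegree.trans_lt ?_
    rw [natDegree_divByMonic p hQ, natDegree_eq_of_degree_eq_some hQn]
    exact_mod_cast (by omega : p.natDegree - n < n)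
  calc ∑ j, w j * p.eval (x j) = ∑ j, w j * (p %ₘ Q).eval (x j) := by
        conv_lhs => rw [← hdiv]
        simp_rw [eval_add, eval_mul, (hroot _).eq_zero, zero_mul, add_zero]
    _ = ∫ t, (p %ₘ Q).eval t ∂μ + ∫ t, Q.eval t * (p /ₘ Q).eval t ∂μ := by
        rw [hexact _ hrem, hQorth _ hquot, add_zero]
    _ = ∫ t, p.eval t ∂μ := by
        rw [← integral_add (hint _) (by simpa using hint (Q * (p /ₘ Q)))]
        simp_rw [← eval_mul, ← eval_add, hdiv]

theorem integral_eval_mul_eval_eq_zero_of_ne {P : ℕ → ℝ[X]} (hdeg : ∀ i, (P i).degree = i)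
    (horth : ∀ i : ℕ, ∀ q : ℝ[X], q.degree < i → ∫ t, (P i).eval t * q.eval t ∂μ = 0)
    {i k : ℕ} (hik : i ≠ k) : ∫ t, (P i).eval t * (P k).eval t ∂μ = 0 := by
  rcases hik.lt_or_gt with h | h
  · simp_rw [mul_comm ((P i).eval _)]
    exact horth k _ (by rw [hdeg]; exact_mod_cast h)
  · exact horth i _ (by rw [hdeg]; exact_mod_cast h)

theorem integral_eval_mul_eval_of_normalized {P π : ℕ → ℝ[X]} (hdeg : ∀ i, (P i).degree = i)
    (horth : ∀ i : ℕ, ∀ q : ℝ[X], q.degree < i → ∫ t, (P i).eval t * q.eval t ∂μ = 0)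
    (hpos : ∀ i, 0 < ∫ t, (P i).eval t * (P i).eval t ∂μ)
    (hπ : ∀ i, π i = (√(∫ t, (P i).eval t * (P i).eval t ∂μ))⁻¹ • P i) (i k : ℕ) :
    ∫ t, (π i).eval t * (π k).eval t ∂μ = if i = k then 1 else 0 := by
  simp_rw [hπ, eval_smul, smul_eq_mul, mul_mul_mul_comm _ ((P i).eval _), integral_const_mul]
  split_ifs with hik
  · subst hik
    rw [← sq, inv_pow, Real.sq_sqrt (hpos i).le, inv_mul_cancel₀ (hpos i).ne']
  · rw [integral_eval_mul_eval_eq_zero_of_ne hdeg horth hik, mul_zero]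

theorem eq_inv_sum_sq_eval_of_sum_mul_eval_eq_integral {n : ℕ} {φ : ℕ → ℝ[X]}
    (hφdeg : ∀ i, (φ i).natDegree ≤ i)
    (hφ : ∀ i k, ∫ t, (φ i).eval t * (φ k).eval t ∂μ = if i = k then 1 else 0) {x w : Fin n → ℝ}
    (hexact : ∀ q : ℝ[X], q.natDegree < 2 * n → ∑ j, w j * q.eval (x j) = ∫ t, q.eval t ∂μ)
    (j : Fin n) : w j = (∑ i : Fin n, (φ i).eval (x j) ^ 2)⁻¹ := by
  refine eq_inv_sum_sq_eval_of_sum_mul_eval_mul_eval (φ := fun i : Fin n => φ i) (fun i k => ?_) j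
  simp only [Fin.ext_iff, ← hφ]
  simp_rw [← eval_mul]
  refine hexact _ (natDegree_mul_le.trans_lt ?_)
  have := (hφdeg i).trans_lt i.isLt
  have := (hφdeg k).trans_lt k.isLt
  omega

end

theorem gaussian_quadrature_exactness_general
    (μ : Measure ℝ)
    (hmom : ∀ n : ℕ, Integrable (fun t : ℝ => t ^ n) μ)
    (ip : ℝ[X] → ℝ[X] → ℝ)
    (hip : ∀ p q : ℝ[X], ip p q = ∫ t, p.eval t * q.eval t ∂μ)
    (hpos : ∀ p : ℝ[X], p ≠ 0 → 0 < ip p p)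
    (P : ℕ → ℝ[X])
    (hmonic : ∀ i : ℕ, (P i).Monic)
    (hdeg : ∀ i : ℕ, (P i).degree = i)
    (horth : ∀ i : ℕ, ∀ q : ℝ[X], q.degree < (i : ℕ) → ip (P i) q = 0)
    (π : ℕ → ℝ[X])
    (hπ : ∀ i : ℕ, π i = (Real.sqrt (ip (P i) (P i)))⁻¹ • P i)
    (n : ℕ) (hn : 1 ≤ n)
    (lam : Fin n → ℝ) (hlinj : Function.Injective lam)
    (hlroot : ∀ j : Fin n, (π n).eval (lam j) = 0)
    (ν : Fin n → ℝ)
    (hν : ∀ j : Fin n, ν j = (∑ i : Fin n, (π i.val).eval (lam j) ^ 2)⁻¹) :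
    ∀ p : ℝ[X], p.degree ≤ (2 * n - 1 : ℕ) →
      ∑ j : Fin n, ν j * p.eval (lam j) = ∫ t, p.eval t ∂μ := by
  simp only [hip] at hpos horth hπ
  have hint := integrable_eval_of_integrable_pow hmom
  have hnorm i : 0 < ∫ t, (P i).eval t * (P i).eval t ∂μ := hpos _ (hmonic i).ne_zero
  have hroot j : (P n).IsRoot (lam j) := by
    simpa [hπ, Real.sqrt_eq_zero', (hnorm n).not_ge] using hlroot j
  set w : Fin n → ℝ := fun j => ∫ t, (Lagrange.basis Finset.univ lam j).eval t ∂μ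
  have hexact (q : ℝ[X]) (hq : q.natDegree < 2 * n) :
      ∑ j, w j * q.eval (lam j) = ∫ t, q.eval t ∂μ :=
    sum_mul_eval_eq_integral_of_natDegree_lt_two_mul hint (hmonic n) (hdeg n) (horth n) hroot
      (fun r hr => sum_integral_lagrangeBasis_mul_eval hint hlinj (by simpa using hr)) hq
  have hπdeg i : (π i).natDegree ≤ i := by
    rw [hπ]
    exact (natDegree_smul_le _ _).trans (natDegree_eq_of_degree_eq_some (hdeg i)).le
  have hweight : w = ν := funext fun j => (hν j).symm ▸
    eq_inv_sum_sq_eval_of_sum_mul_eval_eq_integral hπdeg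
      (integral_eval_mul_eval_of_normalized hdeg horth hnorm hπ) hexact j
  intro p hp
  rw [← hweight]
  exact hexact p (by have := natDegree_le_iff_degree_le.mpr hp; omega)

/-- the n-point Gaussian quadrature rule has degree of exactness
2n − 1. -/
theorem gaussian_quadrature_exactness
    (μ : Measure ℝ) [IsProbabilityMeasure μ]
    (hmom : ∀ n : ℕ, Integrable (fun t : ℝ => t ^ n) μ)
    (ip : ℝ[X] → ℝ[X] → ℝ)
    (hip : ∀ p q : ℝ[X], ip p q = ∫ t, p.eval t * q.eval t ∂μ)
    (hpos : ∀ p : ℝ[X], p ≠ 0 → 0 < ip p p)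
    (P : ℕ → ℝ[X])
    (hmonic : ∀ i : ℕ, (P i).Monic)
    (hdeg : ∀ i : ℕ, (P i).degree = i)
    (horth : ∀ i : ℕ, ∀ q : ℝ[X], q.degree < (i : ℕ) → ip (P i) q = 0)
    (π : ℕ → ℝ[X])
    (hπ : ∀ i : ℕ, π i = (Real.sqrt (ip (P i) (P i)))⁻¹ • P i)
    (n : ℕ) (hn : 1 ≤ n)
    (lam : Fin n → ℝ) (hlinj : Function.Injective lam)
    (hlroot : ∀ j : Fin n, (π n).eval (lam j) = 0)
    (ν : Fin n → ℝ)
    (hν : ∀ j : Fin n, ν j = (∑ i : Fin n, (π i.val).eval (lam j) ^ 2)⁻¹) :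
    ∀ p : ℝ[X], p.degree ≤ (2 * n - 1 : ℕ) →
      ∑ j : Fin n, ν j * p.eval (lam j) = ∫ t, p.eval t ∂μ :=
  gaussian_quadrature_exactness_general μ hmom ip hip hpos P hmonic hdeg horth π hπ n hn lam hlinj
    hlroot ν hν
end

section
/- (Theorem 1: Lanczos equals Stieltjes with a discrete inner product.) For every 0 ≤ i ≤ m−1, the i-th Lanczos vector satisfies v_i = (√ν_0 · φ_i(f_0), …, √ν_{m−1} · φ_i(f_{m−1})), the Lanczos diagonal coefficient satisfies α_i = Σ_{j=0}^{m−1} f_j φ_i(f_j)² ν_j = ⟨X·φ_i, φ_i⟩, and for 1 ≤ i ≤ m−1 the off-diagonal coefficient satisfies η_i = ⟨φ̄_i, φ̄_i⟩^{1/2} / ⟨φ̄_{i−1}, φ̄_{i−1}⟩^{1/2}; that is, the Lanczos iteration on the diagonal matrix A with starting vector (√ν_j)_j produces exactly the recurrence coefficients and (weight-scaled) evaluations of the polynomials orthonormal with respect to the discrete measure Σ_j ν_j δ_{f_j}. -/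
/-!
The weighted evaluation `p ↦ (√ν_j · p(f_j))_j` is an isometry from `ℝ[X]` with the discrete
inner product into `ℝ^m`, and it turns multiplication by `X` into `A = diag f`. Orthogonality and
the self-adjointness of `X` give the three-term recurrence
`X φ_k = b_{k+1} φ_{k+1} + ⟨X φ_k, φ_k⟩ φ_k + b_k φ_{k-1}`, `b_k = ‖φ̄_k‖ / ‖φ̄_{k-1}‖`,
of the orthonormal polynomials (a monic polynomial of degree `n` orthogonal to all lower degrees
is `φ̄_n`). Its image under the weighted evaluation is the Lanczos recursion, so by induction `v_i`
is the image of `φ_i` and the normalisation `η_i` is `b_i`.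
-/

open Polynomial

theorem LinearMap.BilinForm.apply_inv_sqrt_smul_self {M : Type*} [AddCommGroup M] [Module ℝ M]
    (B : LinearMap.BilinForm ℝ M) {p : M} (hp : 0 < B p p) :
    B ((√(B p p))⁻¹ • p) ((√(B p p))⁻¹ • p) = 1 := by
  have hsq := Real.sq_sqrt hp.le
  have hne := (Real.sqrt_pos.mpr hp).ne'
  rw [LinearMap.map_smul₂, map_smul, smul_eq_mul, smul_eq_mul]
  set N := √(B p p)
  rw [← hsq]
  field_simp

namespace Polynomial

theorem degree_lt_succ_iff {R : Type*} [Semiring R] {p : R[X]} {n : ℕ} :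
    p.degree < ↑(n + 1) ↔ p.degree ≤ n := by
  rw [degree_lt_iff_coeff_zero, degree_le_iff_coeff_zero]
  simp [Nat.cast_lt]

def PosDefOnDegreeLT (B : LinearMap.BilinForm ℝ ℝ[X]) (m : ℕ) : Prop :=
  ∀ p : ℝ[X], p.degree < m → p ≠ 0 → 0 < B p p

structure IsMonicOrthogonal (B : LinearMap.BilinForm ℝ ℝ[X]) (m : ℕ) (P : ℕ → ℝ[X]) : Prop where
  monic : ∀ i < m, (P i).Monic
  degree_eq : ∀ i < m, (P i).degree = i
  apply_eq_zero : ∀ i < m, ∀ q : ℝ[X], q.degree < i → B (P i) q = 0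

namespace IsMonicOrthogonal

variable {B : LinearMap.BilinForm ℝ ℝ[X]} {m : ℕ} {P : ℕ → ℝ[X]}

theorem first_eq_one (hP : IsMonicOrthogonal B m P) (hm : 0 < m) : P 0 = 1 :=
  (hP.monic 0 hm).natDegree_eq_zero.mp (natDegree_eq_of_degree_eq_some (hP.degree_eq 0 hm))

theorem degree_sub_coeff_smul_lt (hP : IsMonicOrthogonal B m P) {n : ℕ} (hn : n < m)
    {q : ℝ[X]} (hq : q.degree ≤ n) : (q - q.coeff n • P n).degree < n := by
  have hPn := hP.degree_eq n hn
  rw [degree_lt_iff_coeff_zero]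
  intro k hk
  rcases hk.eq_or_lt with rfl | hk
  · have : (P n).coeff n = 1 := by
      simpa [natDegree_eq_of_degree_eq_some hPn] using (hP.monic n hn).coeff_natDegree
    simp [this]
  · have hk' : (n : WithBot ℕ) < k := by exact_mod_cast hk
    simp [coeff_eq_zero_of_degree_lt (hq.trans_lt hk'),
      coeff_eq_zero_of_degree_lt (hPn.trans_lt hk')]

theorem apply_eq_coeff_mul (hP : IsMonicOrthogonal B m P) {n : ℕ} (hn : n < m) {q : ℝ[X]}
    (hq : q.degree ≤ n) : B (P n) q = q.coeff n * B (P n) (P n) := by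
  calc B (P n) q = B (P n) (q - q.coeff n • P n) + B (P n) (q.coeff n • P n) := by
        rw [← map_add, sub_add_cancel]
    _ = q.coeff n * B (P n) (P n) := by
        rw [hP.apply_eq_zero n hn _ (hP.degree_sub_coeff_smul_lt hn hq), map_smul, smul_eq_mul,
          zero_add]

theorem apply_self_pos (hpos : PosDefOnDegreeLT B m) (hP : IsMonicOrthogonal B m P) {n : ℕ}
    (hn : n < m) : 0 < B (P n) (P n) :=
  hpos _ (by rw [hP.degree_eq n hn]; exact_mod_cast hn) (hP.monic n hn).ne_zero

theorem sqrt_apply_self_pos (hpos : PosDefOnDegreeLT B m) (hP : IsMonicOrthogonal B m P) {n : ℕ}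
    (hn : n < m) : 0 < √(B (P n) (P n)) :=
  Real.sqrt_pos.mpr (hP.apply_self_pos hpos hn)

theorem eq_of_monic (hpos : PosDefOnDegreeLT B m) (hP : IsMonicOrthogonal B m P) {n : ℕ}
    (hn : n < m) {Q : ℝ[X]} (hQ : Q.Monic) (hQn : Q.degree = n)
    (hQP : ∀ q : ℝ[X], q.degree < n → B Q q = 0) : Q = P n := by
  have hlt : (Q - P n).degree < n := by
    have := degree_sub_lt_left (hQn.trans (hP.degree_eq n hn).symm) hQ.ne_zero
      (by rw [hQ.leadingCoeff, (hP.monic n hn).leadingCoeff])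
    rwa [hQn] at this
  by_contra hne
  have := hpos _ (hlt.trans (by exact_mod_cast hn)) (sub_ne_zero.mpr hne)
  rw [LinearMap.map_sub₂, hQP _ hlt, hP.apply_eq_zero n hn _ hlt, sub_zero] at this
  exact this.false

theorem apply_X_mul_eq (hB : B.IsSymm) (hX : ∀ p q, B (X * p) q = B p (X * q))
    (hpos : PosDefOnDegreeLT B m) (hP : IsMonicOrthogonal B m P)
    {k : ℕ} (hk : k + 1 < m) {r : ℝ[X]} (hr : r.degree ≤ ↑(k + 1)) :
    B (X * P (k + 1)) r =
      B (X * P (k + 1)) (P (k + 1)) / B (P (k + 1)) (P (k + 1)) * B (P (k + 1)) r +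
        B (P (k + 1)) (P (k + 1)) / B (P k) (P k) * B (P k) r := by
  -- `r = c P_{k+1} + s` with `deg s ≤ k`; the pairings of `s` with `X P_{k+1}` and with `P_k`
  -- both only see the coefficient of `s` in degree `k`.
  set c := r.coeff (k + 1)
  set s := r - c • P (k + 1)
  have hr_eq : r = s + c • P (k + 1) := (sub_add_cancel r _).symm
  have hs : s.degree ≤ k := degree_lt_succ_iff.mp (hP.degree_sub_coeff_smul_lt hk hr)
  have hXs : (X * s).degree ≤ ↑(k + 1) := by
    rw [mul_comm, degree_mul_X, Nat.cast_add_one]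
    exact add_le_add_left hs 1
  have hPk_Pk1 : B (P k) (P (k + 1)) = 0 := by
    rw [hB.eq]
    exact hP.apply_eq_zero _ hk _ (by rw [hP.degree_eq k (by omega)]; exact_mod_cast k.lt_succ_self)
  have hXr : B (X * P (k + 1)) r =
      c * B (X * P (k + 1)) (P (k + 1)) + s.coeff k * B (P (k + 1)) (P (k + 1)) := by
    rw [hr_eq, map_add, map_smul, smul_eq_mul, hX (P (k + 1)) s,
      hP.apply_eq_coeff_mul hk hXs, coeff_X_mul]
    ring
  have hPr : B (P k) r = s.coeff k * B (P k) (P k) := by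
    rw [hr_eq, map_add, map_smul, hPk_Pk1, smul_zero, add_zero, hP.apply_eq_coeff_mul (by omega) hs]
  have := (hP.apply_self_pos hpos hk).ne'
  have := (hP.apply_self_pos hpos (by omega : k < m)).ne'
  rw [hXr, hPr, hP.apply_eq_coeff_mul hk hr]
  field_simp
  ring

theorem recurrence_one (hpos : PosDefOnDegreeLT B m)
    (hP : IsMonicOrthogonal B m P) (hm : 1 < m) :
    P 1 = (X - C (B (X * P 0) (P 0) / B (P 0) (P 0))) * P 0 := by
  have hP0 := hP.first_eq_one (by omega)
  refine (hP.eq_of_monic hpos hm ?_ ?_ ?_).symm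
  · rw [hP0, mul_one]
    exact monic_X_sub_C _
  · rw [hP0, mul_one, degree_X_sub_C]
    rfl
  · intro q hq
    have := (hP.apply_self_pos hpos (by omega : 0 < m)).ne'
    have hq0 : q = q.coeff 0 • P 0 := by
      rw [hP0, ← C_mul', mul_one]
      exact eq_C_of_degree_le_zero (by exact_mod_cast degree_lt_succ_iff.mp hq)
    rw [hq0, sub_mul, C_mul', LinearMap.map_sub₂, LinearMap.map_smul₂, map_smul, map_smul]
    simp only [smul_eq_mul]
    field_simp
    ring

theorem recurrence_add_two (hB : B.IsSymm) (hX : ∀ p q, B (X * p) q = B p (X * q))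
    (hpos : PosDefOnDegreeLT B m) (hP : IsMonicOrthogonal B m P)
    {k : ℕ} (hk : k + 2 < m) :
    P (k + 2) =
      (X - C (B (X * P (k + 1)) (P (k + 1)) / B (P (k + 1)) (P (k + 1)))) * P (k + 1) -
        C (B (P (k + 1)) (P (k + 1)) / B (P k) (P k)) * P k := by
  set α := B (X * P (k + 1)) (P (k + 1)) / B (P (k + 1)) (P (k + 1))
  set β := B (P (k + 1)) (P (k + 1)) / B (P k) (P k)
  have hlead : ((X - C α) * P (k + 1)).degree = ↑(k + 2) := by
    rw [degree_mul, degree_X_sub_C, hP.degree_eq _ (by omega)]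
    norm_cast
    omega
  have htail : (C β * P k).degree < ((X - C α) * P (k + 1)).degree := by
    rw [hlead, C_mul']
    refine (degree_smul_le _ _).trans_lt ?_
    rw [hP.degree_eq k (by omega)]
    exact_mod_cast (by omega : k < k + 2)
  refine (hP.eq_of_monic hpos hk (((monic_X_sub_C α).mul (hP.monic _ (by omega))).sub_of_left htail)
    (by rw [degree_sub_eq_left_of_degree_lt htail, hlead]) fun q hq => ?_).symm
  rw [sub_mul, C_mul', C_mul', LinearMap.map_sub₂, LinearMap.map_sub₂, LinearMap.map_smul₂,
    LinearMap.map_smul₂, hP.apply_X_mul_eq hB hX hpos (by omega) (degree_lt_succ_iff.mp hq)]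
  simp only [smul_eq_mul, α, β]
  ring

variable {φ : ℕ → ℝ[X]}

theorem apply_normalized_self (hpos : PosDefOnDegreeLT B m)
    (hP : IsMonicOrthogonal B m P) (hφ : ∀ i < m, φ i = (√(B (P i) (P i)))⁻¹ • P i) {i : ℕ}
    (hi : i < m) : B (φ i) (φ i) = 1 := by
  rw [hφ i hi]
  exact B.apply_inv_sqrt_smul_self (hP.apply_self_pos hpos hi)

theorem normalized_recurrence_one (hpos : PosDefOnDegreeLT B m)
    (hP : IsMonicOrthogonal B m P) (hφ : ∀ i < m, φ i = (√(B (P i) (P i)))⁻¹ • P i)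
    (hm : 1 < m) :
    (X - C (B (X * φ 0) (φ 0))) * φ 0 =
      C (√(B (P 1) (P 1)) / √(B (P 0) (P 0))) * φ 1 := by
  have h₁ := (hP.sqrt_apply_self_pos hpos hm).ne'
  have h₀ := (hP.sqrt_apply_self_pos hpos (by omega : 0 < m)).ne'
  have hsq₀ := Real.sq_sqrt (hP.apply_self_pos hpos (by omega : 0 < m)).le
  rw [hφ 1 hm, hφ 0 (by omega)]
  set N₁ := √(B (P 1) (P 1))
  set N₀ := √(B (P 0) (P 0))
  rw [hP.recurrence_one hpos hm, ← hsq₀]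
  simp only [mul_smul_comm, map_smul, LinearMap.smul_apply, smul_eq_mul, sub_mul, C_mul',
    smul_sub, smul_smul]
  match_scalars <;> field_simp

theorem normalized_recurrence_add_two (hB : B.IsSymm) (hX : ∀ p q, B (X * p) q = B p (X * q))
    (hpos : PosDefOnDegreeLT B m) (hP : IsMonicOrthogonal B m P)
    (hφ : ∀ i < m, φ i = (√(B (P i) (P i)))⁻¹ • P i) {k : ℕ} (hk : k + 2 < m) :
    (X - C (B (X * φ (k + 1)) (φ (k + 1)))) * φ (k + 1) -
        C (√(B (P (k + 1)) (P (k + 1))) / √(B (P k) (P k))) * φ k =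
      C (√(B (P (k + 2)) (P (k + 2))) / √(B (P (k + 1)) (P (k + 1)))) * φ (k + 2) := by
  have h₂ := (hP.sqrt_apply_self_pos hpos hk).ne'
  have h₁ := (hP.sqrt_apply_self_pos hpos (by omega : k + 1 < m)).ne'
  have h₀ := (hP.sqrt_apply_self_pos hpos (by omega : k < m)).ne'
  have hsq₁ := Real.sq_sqrt (hP.apply_self_pos hpos (by omega : k + 1 < m)).le
  have hsq₀ := Real.sq_sqrt (hP.apply_self_pos hpos (by omega : k < m)).le
  rw [hφ (k + 2) hk, hφ (k + 1) (by omega), hφ k (by omega)]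
  set N₂ := √(B (P (k + 2)) (P (k + 2)))
  set N₁ := √(B (P (k + 1)) (P (k + 1)))
  set N₀ := √(B (P k) (P k))
  rw [hP.recurrence_add_two hB hX hpos hk, ← hsq₁, ← hsq₀]
  simp only [mul_smul_comm, map_smul, LinearMap.smul_apply, smul_eq_mul, sub_mul, C_mul',
    smul_sub, smul_smul]
  match_scalars <;> field_simp

end IsMonicOrthogonal

end Polynomial

section Discrete

variable {ι : Type*} [Fintype ι] {f ν : ι → ℝ}

variable (f ν) in
noncomputable def discreteInner : LinearMap.BilinForm ℝ ℝ[X] :=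
  LinearMap.mk₂ ℝ (fun p q => ∑ j, p.eval (f j) * q.eval (f j) * ν j)
    (fun p₁ p₂ q => by simp only [eval_add, add_mul, Finset.sum_add_distrib])
    (fun c p q => by simp only [eval_smul, smul_eq_mul, Finset.mul_sum, mul_assoc])
    (fun p q₁ q₂ => by simp only [eval_add, mul_add, add_mul, Finset.sum_add_distrib])
    (fun c p q => by
      simp only [eval_smul, smul_eq_mul, Finset.mul_sum]
      exact Finset.sum_congr rfl fun j _ => by ring)

variable (f ν) in
noncomputable def weightedEval (p : ℝ[X]) : ι → ℝ := fun j => √(ν j) * p.eval (f j)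

theorem discreteInner_apply (p q : ℝ[X]) :
    discreteInner f ν p q = ∑ j, p.eval (f j) * q.eval (f j) * ν j :=
  rfl

theorem discreteInner_isSymm : (discreteInner f ν).IsSymm :=
  ⟨fun p q => Finset.sum_congr rfl fun j _ => by ring⟩

theorem discreteInner_X_mul (p q : ℝ[X]) :
    discreteInner f ν (X * p) q = discreteInner f ν p (X * q) :=
  Finset.sum_congr rfl fun j _ => by simp only [eval_mul, eval_X]; ring

theorem discreteInner_posDefOnDegreeLT (hf : Function.Injective f) (hν : ∀ j, 0 < ν j) :
    PosDefOnDegreeLT (discreteInner f ν) (Fintype.card ι) := by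
  intro p hp hp0
  obtain ⟨j, hj⟩ : ∃ j, p.eval (f j) ≠ 0 := by
    by_contra! h
    exact hp0 (p.eq_zero_of_natDegree_lt_card_of_eval_eq_zero hf h
      ((natDegree_lt_iff_degree_lt hp0).mpr hp))
  exact Finset.sum_pos' (fun i _ => mul_nonneg (mul_self_nonneg _) (hν i).le)
    ⟨j, Finset.mem_univ j, mul_pos (mul_self_pos.mpr hj) (hν j)⟩

theorem discreteInner_eq_sum_weightedEval (hν : ∀ j, 0 ≤ ν j) (p q : ℝ[X]) :
    discreteInner f ν p q = ∑ j, weightedEval f ν p j * weightedEval f ν q j :=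
  Finset.sum_congr rfl fun j _ => by
    rw [weightedEval, weightedEval]
    linear_combination -(p.eval (f j) * q.eval (f j)) * Real.mul_self_sqrt (hν j)

end Discrete

/-- The Lanczos iteration for `A = diag f`, i.e. `(A w)_j = f_j w_j`, started from `(√ν_j)_j`;
`vt i` is `ṽ_i`. -/
structure IsLanczosIteration {ι : Type*} [Fintype ι] (f ν : ι → ℝ) (vt v : ℕ → ι → ℝ)
    (η a : ℕ → ℝ) : Prop where
  vt_zero : vt 0 = fun j => √(ν j)
  eta_eq : ∀ i, η i = √(∑ j, vt i j ^ 2)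
  v_eq : ∀ i, v i = fun j => (η i)⁻¹ * vt i j
  a_eq : ∀ i, a i = ∑ j, v i j * (f j * v i j)
  vt_one : vt 1 = fun j => (f j - a 0) * v 0 j
  vt_succ : ∀ i, 1 ≤ i → vt (i + 1) = fun j => (f j - a i) * v i j - η i * v (i - 1) j

namespace IsLanczosIteration

variable {ι : Type*} [Fintype ι] {f ν : ι → ℝ} {vt v : ℕ → ι → ℝ} {η a : ℕ → ℝ}

theorem eta_eq_and_v_eq_of_vt_eq (hL : IsLanczosIteration f ν vt v η a) (hν : ∀ j, 0 ≤ ν j)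
    {i : ℕ} {c : ℝ} (hc : 0 < c) {p : ℝ[X]} (hp : discreteInner f ν p p = 1)
    (hvt : vt i = fun j => c * weightedEval f ν p j) :
    η i = c ∧ v i = weightedEval f ν p := by
  have hη : η i = c := by
    have hsum : ∑ j, (c * weightedEval f ν p j) ^ 2 = c ^ 2 * discreteInner f ν p p := by
      rw [discreteInner_eq_sum_weightedEval hν, Finset.mul_sum]
      exact Finset.sum_congr rfl fun j _ => by ring
    rw [hL.eta_eq, hvt, hsum, hp, mul_one, Real.sqrt_sq hc.le]
  refine ⟨hη, ?_⟩
  rw [hL.v_eq, hη, hvt]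
  funext j
  field_simp

theorem a_eq_of_v_eq (hL : IsLanczosIteration f ν vt v η a) (hν : ∀ j, 0 ≤ ν j) {i : ℕ}
    {p : ℝ[X]} (hv : v i = weightedEval f ν p) : a i = discreteInner f ν (X * p) p := by
  rw [hL.a_eq, hv, discreteInner_eq_sum_weightedEval hν]
  refine Finset.sum_congr rfl fun j _ => ?_
  simp only [weightedEval, eval_mul, eval_X]
  ring

variable {P φ : ℕ → ℝ[X]}

theorem v_zero (hL : IsLanczosIteration f ν vt v η a) (hf : Function.Injective f)
    (hν : ∀ j, 0 < ν j) (hP : IsMonicOrthogonal (discreteInner f ν) (Fintype.card ι) P)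
    (hφ : ∀ i < Fintype.card ι, φ i = (√(discreteInner f ν (P i) (P i)))⁻¹ • P i)
    (hι : 0 < Fintype.card ι) : v 0 = weightedEval f ν (φ 0) := by
  have hpos := discreteInner_posDefOnDegreeLT hf hν
  have hP0 := hP.first_eq_one hι
  refine (hL.eta_eq_and_v_eq_of_vt_eq (fun j => (hν j).le) (hP.sqrt_apply_self_pos hpos hι)
    (hP.apply_normalized_self hpos hφ hι) ?_).2
  have hne := (hP.sqrt_apply_self_pos hpos hι).ne'
  rw [hL.vt_zero, hφ 0 hι]
  funext j
  simp only [weightedEval, eval_smul, smul_eq_mul, hP0, eval_one] at hne ⊢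
  field_simp

theorem v_eq_and_eta_succ_eq (hL : IsLanczosIteration f ν vt v η a)
    (hf : Function.Injective f) (hν : ∀ j, 0 < ν j)
    (hP : IsMonicOrthogonal (discreteInner f ν) (Fintype.card ι) P)
    (hφ : ∀ i < Fintype.card ι, φ i = (√(discreteInner f ν (P i) (P i)))⁻¹ • P i) :
    ∀ k, k + 1 < Fintype.card ι →
      v k = weightedEval f ν (φ k) ∧ v (k + 1) = weightedEval f ν (φ (k + 1)) ∧
        η (k + 1) = √(discreteInner f ν (P (k + 1)) (P (k + 1))) /
          √(discreteInner f ν (P k) (P k)) := by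
  have hν' := fun j => (hν j).le
  have hpos := discreteInner_posDefOnDegreeLT hf hν
  intro k
  induction k with
  | zero =>
    intro h₁
    have hv₀ := hL.v_zero hf hν hP hφ (by omega)
    have hrec := hP.normalized_recurrence_one hpos hφ h₁
    obtain ⟨hη₁, hv₁⟩ := hL.eta_eq_and_v_eq_of_vt_eq hν' (div_pos (hP.sqrt_apply_self_pos hpos h₁)
      (hP.sqrt_apply_self_pos hpos (by omega : 0 < Fintype.card ι)))
      (hP.apply_normalized_self hpos hφ h₁) (by
        rw [hL.vt_one, hv₀, hL.a_eq_of_v_eq hν' hv₀]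
        funext j
        have := congrArg (eval (f j)) hrec
        simp only [eval_mul, eval_sub, eval_X, eval_C] at this
        simp only [weightedEval]
        linear_combination √(ν j) * this)
    exact ⟨hv₀, hv₁, hη₁⟩
  | succ k ih =>
    intro hk
    obtain ⟨hvk, hvk₁, hηk₁⟩ := ih (by omega)
    have hrec :=
      hP.normalized_recurrence_add_two discreteInner_isSymm discreteInner_X_mul hpos hφ hk
    obtain ⟨hη₂, hv₂⟩ := hL.eta_eq_and_v_eq_of_vt_eq hν' (div_pos (hP.sqrt_apply_self_pos hpos hk)
      (hP.sqrt_apply_self_pos hpos (by omega : k + 1 < Fintype.card ι)))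
      (hP.apply_normalized_self hpos hφ hk) (by
        rw [hL.vt_succ (k + 1) (by omega), hvk₁, hL.a_eq_of_v_eq hν' hvk₁, hηk₁,
          Nat.add_sub_cancel, hvk]
        funext j
        have := congrArg (eval (f j)) hrec
        simp only [eval_mul, eval_sub, eval_X, eval_C] at this
        simp only [weightedEval]
        linear_combination √(ν j) * this)
    exact ⟨hvk₁, hv₂, hη₂⟩

theorem v_eq_weightedEval (hL : IsLanczosIteration f ν vt v η a) (hf : Function.Injective f)
    (hν : ∀ j, 0 < ν j) (hP : IsMonicOrthogonal (discreteInner f ν) (Fintype.card ι) P)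
    (hφ : ∀ i < Fintype.card ι, φ i = (√(discreteInner f ν (P i) (P i)))⁻¹ • P i) {i : ℕ}
    (hi : i < Fintype.card ι) : v i = weightedEval f ν (φ i) := by
  cases i with
  | zero => exact hL.v_zero hf hν hP hφ hi
  | succ k => exact (hL.v_eq_and_eta_succ_eq hf hν hP hφ k hi).2.1

theorem eta_eq_div (hL : IsLanczosIteration f ν vt v η a) (hf : Function.Injective f)
    (hν : ∀ j, 0 < ν j) (hP : IsMonicOrthogonal (discreteInner f ν) (Fintype.card ι) P)
    (hφ : ∀ i < Fintype.card ι, φ i = (√(discreteInner f ν (P i) (P i)))⁻¹ • P i) {i : ℕ}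
    (h₁ : 1 ≤ i) (hi : i < Fintype.card ι) :
    η i = √(discreteInner f ν (P i) (P i)) / √(discreteInner f ν (P (i - 1)) (P (i - 1))) := by
  obtain ⟨k, rfl⟩ := Nat.exists_eq_add_of_le' h₁
  exact (hL.v_eq_and_eta_succ_eq hf hν hP hφ k hi).2.2

end IsLanczosIteration

theorem lanczos_eq_stieltjes_discrete_general
    (m : ℕ)
    (f : Fin m → ℝ) (hf : Function.Injective f)
    (ν : Fin m → ℝ) (hνpos : ∀ j, 0 < ν j)
    (ip : ℝ[X] → ℝ[X] → ℝ)
    (hip : ∀ p q : ℝ[X], ip p q = ∑ j : Fin m, p.eval (f j) * q.eval (f j) * ν j)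
    (Pb : ℕ → ℝ[X])
    (hmonic : ∀ i : ℕ, i < m → (Pb i).Monic)
    (hdeg : ∀ i : ℕ, i < m → (Pb i).degree = i)
    (horth : ∀ i : ℕ, i < m → ∀ q : ℝ[X], q.degree < (i : ℕ) → ip (Pb i) q = 0)
    (φ : ℕ → ℝ[X])
    (hφ : ∀ i : ℕ, i < m → φ i = (Real.sqrt (ip (Pb i) (Pb i)))⁻¹ • Pb i)
    -- the Lanczos iteration: vt is ṽ, v the normalized Lanczos vectors,
    -- η the off-diagonal and a the diagonal recurrence coefficients
    (vt v : ℕ → Fin m → ℝ) (η a : ℕ → ℝ)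
    (hvt0 : vt 0 = fun j => Real.sqrt (ν j))
    (hη : ∀ i : ℕ, η i = Real.sqrt (∑ j : Fin m, vt i j ^ 2))
    (hv : ∀ i : ℕ, v i = fun j => (η i)⁻¹ * vt i j)
    (ha : ∀ i : ℕ, a i = ∑ j : Fin m, v i j * (f j * v i j))
    (hvt1 : vt 1 = fun j => (f j - a 0) * v 0 j)
    (hvts : ∀ i : ℕ, 1 ≤ i →
      vt (i + 1) = fun j => (f j - a i) * v i j - η i * v (i - 1) j) :
    (∀ i : ℕ, i < m →
      (v i = fun j => Real.sqrt (ν j) * (φ i).eval (f j)) ∧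
      a i = ∑ j : Fin m, f j * (φ i).eval (f j) ^ 2 * ν j ∧
      a i = ip (X * φ i) (φ i)) ∧
    (∀ i : ℕ, 1 ≤ i → i < m →
      η i = Real.sqrt (ip (Pb i) (Pb i)) / Real.sqrt (ip (Pb (i - 1)) (Pb (i - 1)))) := by
  obtain rfl : ip = fun p q => discreteInner f ν p q := funext₂ hip
  have hL : IsLanczosIteration f ν vt v η a := ⟨hvt0, hη, hv, ha, hvt1, hvts⟩
  have hP : IsMonicOrthogonal (discreteInner f ν) (Fintype.card (Fin m)) Pb := by
    rw [Fintype.card_fin]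
    exact ⟨hmonic, hdeg, horth⟩
  have hφ' : ∀ i < Fintype.card (Fin m),
      φ i = (√(discreteInner f ν (Pb i) (Pb i)))⁻¹ • Pb i := by
    rw [Fintype.card_fin]
    exact hφ
  refine ⟨fun i hi => ?_, fun i h₁ hi => hL.eta_eq_div hf hνpos hP hφ' h₁ (by simpa using hi)⟩
  have hvi := hL.v_eq_weightedEval hf hνpos hP hφ' (by simpa using hi)
  have hai := hL.a_eq_of_v_eq (fun j => (hνpos j).le) hvi
  refine ⟨hvi, ?_, hai⟩
  rw [hai, discreteInner_apply]
  exact Finset.sum_congr rfl fun j _ => by simp only [eval_mul, eval_X]; ring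

/-- Theorem 1: Lanczos' method on the diagonal matrix
A = diag(f_0,…,f_{m−1}) with starting vector (√ν_j)_j is equivalent to the
Stieltjes procedure with the discrete inner product: the Lanczos vectors are
the weight-scaled evaluations of the orthonormal polynomials, and the Lanczos
coefficients are the recurrence coefficients of those polynomials. -/
theorem lanczos_eq_stieltjes_discrete
    (m : ℕ) (hm : 1 ≤ m)
    (f : Fin m → ℝ) (hf : Function.Injective f)
    (ν : Fin m → ℝ) (hνpos : ∀ j, 0 < ν j) (hνsum : ∑ j : Fin m, ν j = 1)
    (ip : ℝ[X] → ℝ[X] → ℝ)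
    (hip : ∀ p q : ℝ[X], ip p q = ∑ j : Fin m, p.eval (f j) * q.eval (f j) * ν j)
    (Pb : ℕ → ℝ[X])
    (hmonic : ∀ i : ℕ, i < m → (Pb i).Monic)
    (hdeg : ∀ i : ℕ, i < m → (Pb i).degree = i)
    (horth : ∀ i : ℕ, i < m → ∀ q : ℝ[X], q.degree < (i : ℕ) → ip (Pb i) q = 0)
    (φ : ℕ → ℝ[X])
    (hφ : ∀ i : ℕ, i < m → φ i = (Real.sqrt (ip (Pb i) (Pb i)))⁻¹ • Pb i)
    -- the Lanczos iteration: vt is ṽ, v the normalized Lanczos vectors,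
    -- η the off-diagonal and a the diagonal recurrence coefficients
    (vt v : ℕ → Fin m → ℝ) (η a : ℕ → ℝ)
    (hvt0 : vt 0 = fun j => Real.sqrt (ν j))
    (hη : ∀ i : ℕ, η i = Real.sqrt (∑ j : Fin m, vt i j ^ 2))
    (hv : ∀ i : ℕ, v i = fun j => (η i)⁻¹ * vt i j)
    (ha : ∀ i : ℕ, a i = ∑ j : Fin m, v i j * (f j * v i j))
    (hvt1 : vt 1 = fun j => (f j - a 0) * v 0 j)
    (hvts : ∀ i : ℕ, 1 ≤ i →
      vt (i + 1) = fun j => (f j - a i) * v i j - η i * v (i - 1) j) :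
    (∀ i : ℕ, i < m →
      (v i = fun j => Real.sqrt (ν j) * (φ i).eval (f j)) ∧
      a i = ∑ j : Fin m, f j * (φ i).eval (f j) ^ 2 * ν j ∧
      a i = ip (X * φ i) (φ i)) ∧
    (∀ i : ℕ, 1 ≤ i → i < m →
      η i = Real.sqrt (ip (Pb i) (Pb i)) / Real.sqrt (ip (Pb (i - 1)) (Pb (i - 1)))) :=
  lanczos_eq_stieltjes_discrete_general m f hf ν hνpos ip hip Pb hmonic hdeg horth φ hφ vt v η a
    hvt0 hη hv ha hvt1 hvts
end

section
/- The composite-function approximation is exact for low-degree outer functions: let 1 ≤ k ≤ m, let θ_0, …, θ_{k−1} be the k distinct real roots of φ̄_k with weights μ_l = 1 / (Σ_{i=0}^{k−1} φ_i(θ_l)²). If g is a real polynomial with deg g ≤ k−1, then with coefficients ĝ_i = Σ_{l=0}^{k−1} μ_l g(θ_l) φ_i(θ_l) for 0 ≤ i ≤ k−1, one has Σ_{i=0}^{k−1} ĝ_i φ_i(f_j) = g(f_j) for every j = 0, …, m−1. -/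
/-!
With `ℓ p = ∑ j, p (f j) ν j`, the nodes `θ` (the zeros of `φ̄_k`) and the weights
`λ_l = ℓ (L_l)` of the Lagrange basis `L` form a Gauss rule: dividing by `φ̄_k` shows it is exact
for degree `< 2k`. Applied to `φ_i φ_i'` it gives `B Λ Bᵀ = 1` for the square matrix
`B i l = φ_i (θ_l)`, hence `Λ Bᵀ B = 1`. The diagonal of this identity says `λ_l = μ_l`, and the
whole identity says that `∑ ĝ_i φ_i` agrees with `g` at the `k` nodes; both have degree `< k`.
-/

open Polynomial Finset

namespace Matrix

variable {n R : Type*} [Fintype n] [DecidableEq n] [CommRing R] (B : Matrix n n R) (w : n → R)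

theorem col_orthogonality_of_row_orthogonality
    (h : ∀ i i', ∑ l, w l * (B i l * B i' l) = if i = i' then 1 else 0) (l l' : n) :
    w l * ∑ i, B i l * B i l' = if l = l' then 1 else 0 := by
  have hB : B * (diagonal w * Bᵀ) = 1 := by
    ext i i'
    rw [mul_apply, one_apply, ← h i i']
    simp only [diagonal_mul, transpose_apply]
    exact sum_congr rfl fun _ _ => by ring
  have hB' : diagonal w * Bᵀ * B = 1 := mul_eq_one_comm.mp hB
  have hll' := congrFun (congrFun hB' l) l'
  rw [mul_apply, one_apply] at hll'
  simp only [diagonal_mul, transpose_apply] at hll'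
  rw [← hll', mul_sum]
  simp only [mul_assoc]

theorem sum_sum_mul_mul_eq_of_row_orthogonality
    (h : ∀ i i', ∑ l, w l * (B i l * B i' l) = if i = i' then 1 else 0) (G : n → R) (l' : n) :
    ∑ i, (∑ l, w l * G l * B i l) * B i l' = G l' := by
  calc ∑ i, (∑ l, w l * G l * B i l) * B i l'
      = ∑ l, G l * (w l * ∑ i, B i l * B i l') := by
        simp only [sum_mul, mul_sum]
        rw [sum_comm]
        exact sum_congr rfl fun _ _ => sum_congr rfl fun _ _ => by ring
    _ = G l' := by simp [B.col_orthogonality_of_row_orthogonality w h]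

end Matrix

namespace Lagrange

variable {F ι : Type*} [Field F] [DecidableEq ι] {s : Finset ι} {v : ι → F}

theorem linearMap_eq_sum_eval_mul_basis (ℓ : F[X] →ₗ[F] F) (hvs : Set.InjOn v s) {p : F[X]}
    (hp : p.degree < #s) : ℓ p = ∑ i ∈ s, p.eval (v i) * ℓ (Lagrange.basis s v i) := by
  conv_lhs => rw [eq_interpolate hvs hp]
  simp [interpolate, C_mul']

theorem linearMap_eq_sum_eval_mul_basis_of_orthogonal (ℓ : F[X] →ₗ[F] F) (hvs : Set.InjOn v s)
    {P : F[X]} (hPm : P.Monic) (hPdeg : P.natDegree = #s) (hroot : ∀ i ∈ s, P.eval (v i) = 0)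
    (horth : ∀ q : F[X], q.degree < #s → ℓ (P * q) = 0) {p : F[X]} (hp : p.degree < ↑(2 * #s)) :
    ℓ p = ∑ i ∈ s, p.eval (v i) * ℓ (Lagrange.basis s v i) := by
  have hquot : (p /ₘ P).degree < #s := by
    rcases eq_or_ne p 0 with rfl | hp0
    · simp
    rw [← natDegree_lt_iff_degree_lt hp0] at hp
    refine degree_le_natDegree.trans_lt ?_
    rw [natDegree_divByMonic p hPm, hPdeg]
    exact_mod_cast (by omega : p.natDegree - #s < #s)
  have hrem : (p %ₘ P).degree < #s := by
    rw [← hPdeg, ← degree_eq_natDegree hPm.ne_zero]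
    exact degree_modByMonic_lt p hPm
  calc ℓ p = ℓ (p %ₘ P) := by
        conv_lhs => rw [← modByMonic_add_div p P]
        rw [map_add, horth _ hquot, add_zero]
    _ = ∑ i ∈ s, p.eval (v i) * ℓ (Lagrange.basis s v i) := by
        rw [linearMap_eq_sum_eval_mul_basis ℓ hvs hrem]
        refine sum_congr rfl fun i hi => ?_
        simp [modByMonic_eq_sub_mul_div p P, hroot i hi]

end Lagrange

section DiscreteMoment

variable {ι : Type*} [Fintype ι]

noncomputable def discreteMoment (f ν : ι → ℝ) : ℝ[X] →ₗ[ℝ] ℝ :=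
  ∑ j, ν j • leval (f j)

@[simp]
theorem discreteMoment_apply (f ν : ι → ℝ) (p : ℝ[X]) :
    discreteMoment f ν p = ∑ j, p.eval (f j) * ν j := by
  simp [discreteMoment, mul_comm]

theorem discreteMoment_mul_self_pos {f ν : ι → ℝ}
    (hf : Function.Injective f) (hν : ∀ j, 0 < ν j) {p : ℝ[X]} (hp0 : p ≠ 0)
    (hp : p.degree < Fintype.card ι) : 0 < discreteMoment f ν (p * p) := by
  obtain ⟨j, hj⟩ : ∃ j, p.eval (f j) ≠ 0 := by
    by_contra! h
    exact hp0 (eq_zero_of_degree_lt_of_eval_index_eq_zero univ hf.injOn (by simpa) fun j _ => h j)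
  rw [discreteMoment_apply]
  exact sum_pos' (fun i _ => by rw [eval_mul]; exact mul_nonneg (mul_self_nonneg _) (hν i).le)
    ⟨j, mem_univ j, by rw [eval_mul]; exact mul_pos (mul_self_pos.mpr hj) (hν j)⟩

end DiscreteMoment

theorem orthonormal_of_orthogonal (ℓ : ℝ[X] →ₗ[ℝ] ℝ) {P φ : ℕ → ℝ[X]} {n : ℕ}
    (hdeg : ∀ i < n, (P i).degree = i)
    (horth : ∀ i < n, ∀ q : ℝ[X], q.degree < i → ℓ (P i * q) = 0)
    (hpos : ∀ i < n, 0 < ℓ (P i * P i))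
    (hφ : ∀ i < n, φ i = (√(ℓ (P i * P i)))⁻¹ • P i) {i j : ℕ} (hi : i < n) (hj : j < n) :
    ℓ (φ i * φ j) = if i = j then 1 else 0 := by
  have hP : ℓ (P i * P j) = if i = j then ℓ (P i * P i) else 0 := by
    rcases lt_trichotomy i j with hij | rfl | hij
    · rw [if_neg hij.ne, mul_comm, horth j hj _ (by rw [hdeg i hi]; exact_mod_cast hij)]
    · rw [if_pos rfl]
    · rw [if_neg hij.ne', horth i hi _ (by rw [hdeg j hj]; exact_mod_cast hij)]
  rw [hφ i hi, hφ j hj, smul_mul_smul, map_smul, hP, smul_eq_mul]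
  split_ifs with hij
  · subst hij
    have hposi := hpos i hi
    field_simp
    rw [Real.sq_sqrt hposi.le]
  · rw [mul_zero]

section GaussQuadrature

variable {F : Type*} [Field F] {k : ℕ}

noncomputable def quadratureWeight (ℓ : F[X] →ₗ[F] F) (θ : Fin k → F) (l : Fin k) : F :=
  ℓ (Lagrange.basis univ θ l)

theorem sum_quadratureWeight_mul_eval_mul_eval (ℓ : F[X] →ₗ[F] F) {P : F[X]} {θ : Fin k → F}
    {φ : Fin k → F[X]} (hθ : Function.Injective θ) (hPm : P.Monic) (hPdeg : P.natDegree = k)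
    (hroot : ∀ l, P.eval (θ l) = 0) (horth : ∀ q : F[X], q.degree < k → ℓ (P * q) = 0)
    (hφdeg : ∀ i, (φ i).natDegree < k) (i i' : Fin k) :
    ∑ l, quadratureWeight ℓ θ l * ((φ i).eval (θ l) * (φ i').eval (θ l)) = ℓ (φ i * φ i') := by
  have hdeg : (φ i * φ i').degree < ↑(2 * #(univ : Finset (Fin k))) := by
    refine degree_le_natDegree.trans_lt ?_
    have hmul := natDegree_mul_le (p := φ i) (q := φ i')
    have hi := hφdeg i
    have hi' := hφdeg i'
    simp only [card_univ, Fintype.card_fin]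
    exact_mod_cast (by omega)
  rw [Lagrange.linearMap_eq_sum_eval_mul_basis_of_orthogonal ℓ hθ.injOn hPm (by simpa)
    (fun l _ => hroot l) (by simpa using horth) hdeg]
  simp only [eval_mul, quadratureWeight, mul_comm]

theorem sum_smul_eq_of_discrete_orthonormal {θ : Fin k → F} {φ : Fin k → F[X]} {w : Fin k → F}
    (hθ : Function.Injective θ)
    (hφdeg : ∀ i, (φ i).natDegree < k)
    (h : ∀ i i', ∑ l, w l * ((φ i).eval (θ l) * (φ i').eval (θ l)) = if i = i' then 1 else 0)
    {g : F[X]} (hg : g.degree < k) :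
    ∑ i, (∑ l, w l * g.eval (θ l) * (φ i).eval (θ l)) • φ i = g := by
  refine eq_of_degrees_lt_of_eval_index_eq univ hθ.injOn ?_ (by simpa using hg) fun l' _ => ?_
  · have : ∑ i, (∑ l, w l * g.eval (θ l) * (φ i).eval (θ l)) • φ i ∈ degreeLT F k :=
      sum_mem fun i _ => Submodule.smul_mem _ _ <|
        mem_degreeLT.mpr <| degree_le_natDegree.trans_lt <| by exact_mod_cast hφdeg i
    simpa using mem_degreeLT.mp this
  · simp only [eval_finsetSum, eval_smul, smul_eq_mul]
    exact Matrix.sum_sum_mul_mul_eq_of_row_orthogonality (.of fun i l => (φ i).eval (θ l)) w h _ l'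

end GaussQuadrature

theorem composite_approximation_exact_low_degree_general
    (m : ℕ)
    (f : Fin m → ℝ) (hf : Function.Injective f)
    (ν : Fin m → ℝ) (hνpos : ∀ j, 0 < ν j)
    (ip : ℝ[X] → ℝ[X] → ℝ)
    (hip : ∀ p q : ℝ[X], ip p q = ∑ j : Fin m, p.eval (f j) * q.eval (f j) * ν j)
    (Pb : ℕ → ℝ[X])
    (hmonic : ∀ i : ℕ, i ≤ m → (Pb i).Monic)
    (hdeg : ∀ i : ℕ, i ≤ m → (Pb i).degree = i)
    (horth : ∀ i : ℕ, i ≤ m → ∀ q : ℝ[X], q.degree < (i : ℕ) → ip (Pb i) q = 0)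
    (φ : ℕ → ℝ[X])
    (hφ : ∀ i : ℕ, i < m → φ i = (Real.sqrt (ip (Pb i) (Pb i)))⁻¹ • Pb i)
    (k : ℕ) (hk1 : 1 ≤ k) (hkm : k ≤ m)
    (θ : Fin k → ℝ) (hθinj : Function.Injective θ)
    (hθroot : ∀ l : Fin k, (Pb k).eval (θ l) = 0)
    (w : Fin k → ℝ)
    (hw : ∀ l : Fin k, w l = (∑ i : Fin k, (φ i.val).eval (θ l) ^ 2)⁻¹)
    (g : ℝ[X]) (hg : g.degree ≤ (k - 1 : ℕ))
    (ghat : Fin k → ℝ)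
    (hghat : ∀ i : Fin k,
      ghat i = ∑ l : Fin k, w l * g.eval (θ l) * (φ i.val).eval (θ l)) :
    ∀ j : Fin m, ∑ i : Fin k, ghat i * (φ i.val).eval (f j) = g.eval (f j) := by
  set ℓ := discreteMoment f ν
  obtain rfl : ip = fun p q => ℓ (p * q) := by
    funext p q
    simp [ℓ, hip, eval_mul]
  simp only at horth hφ
  have hpos : ∀ i < k, 0 < ℓ (Pb i * Pb i) := fun i hi => by
    refine discreteMoment_mul_self_pos hf hνpos (hmonic i (by omega)).ne_zero ?_
    rw [hdeg i (by omega), Fintype.card_fin]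
    exact_mod_cast (by omega : i < m)
  have hφdeg : ∀ i : Fin k, (φ i).natDegree < k := fun i => by
    rw [hφ i (by omega)]
    exact (natDegree_smul_le _ _).trans_lt <| by
      simp [natDegree_eq_of_degree_eq_some (hdeg i (by omega))]
  have hdisc (i i' : Fin k) :
      ∑ l, quadratureWeight ℓ θ l * ((φ i).eval (θ l) * (φ i').eval (θ l)) =
        if i = i' then 1 else 0 := by
    rw [sum_quadratureWeight_mul_eval_mul_eval ℓ hθinj (hmonic k hkm)
      (natDegree_eq_of_degree_eq_some (hdeg k hkm)) hθroot (horth k hkm) hφdeg]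
    simpa [Fin.val_inj] using orthonormal_of_orthogonal ℓ (fun i _ => hdeg i (by omega))
      (fun i _ => horth i (by omega)) hpos (fun i _ => hφ i (by omega)) i.isLt i'.isLt
  obtain rfl : w = quadratureWeight ℓ θ := funext fun l => by
    have := Matrix.col_orthogonality_of_row_orthogonality _ _ hdisc l l
    simp only [← sq] at this
    rw [hw l, eq_inv_of_mul_eq_one_left this]
  have hexp := sum_smul_eq_of_discrete_orthonormal hθinj hφdeg hdisc
    (hg.trans_lt (by exact_mod_cast (by omega : k - 1 < k)))
  simp only [← hghat] at hexp
  intro j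
  simpa [eval_finsetSum] using congrArg (eval (f j)) hexp

/-- the composite-function approximation is exact for outer
polynomial functions of degree at most k − 1. -/
theorem composite_approximation_exact_low_degree
    (m : ℕ) (hm : 1 ≤ m)
    (f : Fin m → ℝ) (hf : Function.Injective f)
    (ν : Fin m → ℝ) (hνpos : ∀ j, 0 < ν j) (hνsum : ∑ j : Fin m, ν j = 1)
    (ip : ℝ[X] → ℝ[X] → ℝ)
    (hip : ∀ p q : ℝ[X], ip p q = ∑ j : Fin m, p.eval (f j) * q.eval (f j) * ν j)
    (Pb : ℕ → ℝ[X])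
    (hmonic : ∀ i : ℕ, i ≤ m → (Pb i).Monic)
    (hdeg : ∀ i : ℕ, i ≤ m → (Pb i).degree = i)
    (horth : ∀ i : ℕ, i ≤ m → ∀ q : ℝ[X], q.degree < (i : ℕ) → ip (Pb i) q = 0)
    (φ : ℕ → ℝ[X])
    (hφ : ∀ i : ℕ, i < m → φ i = (Real.sqrt (ip (Pb i) (Pb i)))⁻¹ • Pb i)
    (k : ℕ) (hk1 : 1 ≤ k) (hkm : k ≤ m)
    (θ : Fin k → ℝ) (hθinj : Function.Injective θ)
    (hθroot : ∀ l : Fin k, (Pb k).eval (θ l) = 0)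
    (w : Fin k → ℝ)
    (hw : ∀ l : Fin k, w l = (∑ i : Fin k, (φ i.val).eval (θ l) ^ 2)⁻¹)
    (g : ℝ[X]) (hg : g.degree ≤ (k - 1 : ℕ))
    (ghat : Fin k → ℝ)
    (hghat : ∀ i : Fin k,
      ghat i = ∑ l : Fin k, w l * g.eval (θ l) * (φ i.val).eval (θ l)) :
    ∀ j : Fin m, ∑ i : Fin k, ghat i * (φ i.val).eval (f j) = g.eval (f j) :=
  composite_approximation_exact_low_degree_general m f hf ν hνpos ip hip Pb hmonic hdeg horth φ hφ k
    hk1 hkm θ hθinj hθroot w hw g hg ghat hghat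
end
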